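/- arXiv:1311.2088 — 2 statements merged into one kernel-verified Lean document; each statement's English description precedes it below -/
import Mathlib

section
/- For smooth compactly supported (or Schwartz) functions ψ: ℝ² → ℂ and real-valued A_j: ℝ² → ℝ (j = 1, 2), the covariant Gagliardo–Nirenberg inequality ‖Dψ‖_{L⁴} ≲ ‖ψ‖_{L^∞}^{1/2} ‖D^{(2)}ψ‖_{L²}^{1/2} holds, where D_j = ∂_j + i A_j, Dψ = (D₁ψ, D₂ψ), and D^{(2)}ψ denotes the collection of all second covariant derivatives D_j D_k ψ. -/
open MeasureTheory Complex

/-- Spatial covariant derivative `D_j = ∂_j + i A_j` on `ℝ²`. -/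
noncomputable def Dcov (A : Fin 2 → (Fin 2 → ℝ) → ℝ) (j : Fin 2) (f : (Fin 2 → ℝ) → ℂ) :
    (Fin 2 → ℝ) → ℂ :=
  fun x => fderiv ℝ f x (Pi.single j 1) + Complex.I * (A j x) * f x

open scoped ENNReal NNReal

abbrev E2 := Fin 2 → ℝ

lemma integral_fderiv_apply_eq_zero {h : E2 → ℂ} (hh : ContDiff ℝ (⊤ : ℕ∞) h)
    (hsupp : HasCompactSupport h) (j : Fin 2) :
    ∫ x : E2, fderiv ℝ h x (Pi.single j 1) = 0 := by
  classical
  set F : E2 → ℂ := fun x => fderiv ℝ h x (Pi.single j 1) with hF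
  have hFc : Continuous F := by
    have h1 : ContDiff ℝ (⊤ : ℕ∞) (fderiv ℝ h) := hh.fderiv_right (by simp)
    exact ((ContinuousLinearMap.apply ℝ ℂ ((Pi.single j 1 : E2))).contDiff.comp h1).continuous
  have hFs : HasCompactSupport F := hsupp.fderiv_apply ℝ (Pi.single j 1)
  set e := MeasurableEquiv.finTwoArrow (α := ℝ) with he
  have hmp : MeasurePreserving (⇑e.symm) (volume : Measure (ℝ × ℝ)) volume :=
    (volume_preserving_finTwoArrow ℝ).symm e
  have hcoe : ⇑e.symm = ⇑(Homeomorph.finTwoArrow (X := ℝ)).symm := rfl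
  have key : ∫ x : E2, F x = ∫ p : ℝ × ℝ, F (e.symm p) := by
    rw [hmp.integral_comp e.symm.measurableEmbedding F]
  -- G : continuous compactly supported on ℝ × ℝ
  have hGc : Continuous (fun p : ℝ × ℝ => F (e.symm p)) := by
    rw [show (fun p : ℝ × ℝ => F (e.symm p)) = F ∘ ⇑(Homeomorph.finTwoArrow (X := ℝ)).symm from rfl]
    exact hFc.comp (Homeomorph.finTwoArrow).symm.continuous
  have hGs : HasCompactSupport (fun p : ℝ × ℝ => F (e.symm p)) := by
    rw [show (fun p : ℝ × ℝ => F (e.symm p)) = F ∘ ⇑(Homeomorph.finTwoArrow (X := ℝ)).symm from rfl]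
    exact hFs.comp_homeomorph _
  have hGint : Integrable (fun p : ℝ × ℝ => F (e.symm p)) (volume : Measure (ℝ × ℝ)) :=
    hGc.integrable_of_hasCompactSupport hGs
  -- bound for supports
  obtain ⟨R, hR⟩ : ∃ R : ℝ, tsupport h ∪ tsupport F ⊆ Metric.closedBall 0 R := by
    obtain ⟨R, hR⟩ := ((hsupp.union hFs).isBounded).subset_closedBall 0
    exact ⟨R, hR⟩
  have hRh : ∀ x : E2, h x ≠ 0 → ‖x‖ ≤ R := fun x hx => by
    simpa using hR (Or.inl (subset_tsupport h hx))
  have hRF : ∀ x : E2, F x ≠ 0 → ‖x‖ ≤ R := fun x hx => by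
    simpa using hR (Or.inr (subset_tsupport F hx))
  -- the 1D slice lemma
  have slice : ∀ (c : ℝ × ℝ → ℝ × ℝ), True := fun _ => trivial
  -- handle the two coordinates
  have main : ∫ p : ℝ × ℝ, F (e.symm p) = 0 := by
    fin_cases j
    · -- j = 0 : inner integral over first coordinate
      rw [Measure.volume_eq_prod ℝ ℝ, integral_prod_symm _ (by rwa [← Measure.volume_eq_prod])]
      have inner0 : ∀ y : ℝ, ∫ t : ℝ, F (e.symm (t, y)) = 0 := by
        intro y
        have hder : ∀ t : ℝ, HasDerivAt (fun s : ℝ => h (e.symm (s, y)))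
            (F (e.symm (t, y))) t := by
          intro t
          have hline : HasDerivAt (fun s : ℝ => e.symm (s, y)) (Pi.single 0 1 : E2) t := by
            rw [hasDerivAt_pi]
            intro i
            fin_cases i
            · simpa [e, MeasurableEquiv.finTwoArrow, MeasurableEquiv.piFinTwo] using (hasDerivAt_id' t)
            · simpa [e, MeasurableEquiv.finTwoArrow, MeasurableEquiv.piFinTwo] using (hasDerivAt_const t y)
          exact (hh.differentiable (by simp) (e.symm (t, y))).hasFDerivAt.comp_hasDerivAt t hline
        have hint1 : Integrable (fun t : ℝ => F (e.symm (t, y))) := by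
          apply Continuous.integrable_of_hasCompactSupport
          · exact hGc.comp (Continuous.prodMk_left y)
          · apply HasCompactSupport.intro (isCompact_Icc (a := -R) (b := R))
            intro t ht
            by_contra hne
            have h1 : ‖e.symm (t, y)‖ ≤ R := hRF _ hne
            have h2 : |t| ≤ ‖e.symm (t, y)‖ := by
              simpa [e, MeasurableEquiv.finTwoArrow, MeasurableEquiv.piFinTwo] using norm_le_pi_norm (e.symm (t, y)) 0
            exact ht (by constructor <;> [linarith [abs_le.mp (le_trans h2 h1)]; linarith [(abs_le.mp (le_trans h2 h1)).2]])
        have hint2 : Integrable (fun t : ℝ => h (e.symm (t, y))) := by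
          apply Continuous.integrable_of_hasCompactSupport
          · exact (hh.continuous.comp (Homeomorph.finTwoArrow (X := ℝ)).symm.continuous).comp
              (Continuous.prodMk_left y)
          · apply HasCompactSupport.intro (isCompact_Icc (a := -R) (b := R))
            intro t ht
            by_contra hne
            have h1 : ‖e.symm (t, y)‖ ≤ R := hRh _ hne
            have h2 : |t| ≤ ‖e.symm (t, y)‖ := by
              simpa [e, MeasurableEquiv.finTwoArrow, MeasurableEquiv.piFinTwo] using norm_le_pi_norm (e.symm (t, y)) 0
            exact ht (by constructor <;> [linarith [abs_le.mp (le_trans h2 h1)]; linarith [(abs_le.mp (le_trans h2 h1)).2]])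
        exact integral_eq_zero_of_hasDerivAt_of_integrable hder hint1 hint2
      simp [inner0]
    · -- j = 1 : inner integral over second coordinate
      rw [Measure.volume_eq_prod ℝ ℝ, integral_prod _ (by rwa [← Measure.volume_eq_prod])]
      have inner1 : ∀ x : ℝ, ∫ t : ℝ, F (e.symm (x, t)) = 0 := by
        intro x
        have hder : ∀ t : ℝ, HasDerivAt (fun s : ℝ => h (e.symm (x, s)))
            (F (e.symm (x, t))) t := by
          intro t
          have hline : HasDerivAt (fun s : ℝ => e.symm (x, s)) (Pi.single 1 1 : E2) t := by
            rw [hasDerivAt_pi]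
            intro i
            fin_cases i
            · simpa [e, MeasurableEquiv.finTwoArrow, MeasurableEquiv.piFinTwo] using (hasDerivAt_const t x)
            · simpa [e, MeasurableEquiv.finTwoArrow, MeasurableEquiv.piFinTwo] using (hasDerivAt_id' t)
          exact (hh.differentiable (by simp) (e.symm (x, t))).hasFDerivAt.comp_hasDerivAt t hline
        have hint1 : Integrable (fun t : ℝ => F (e.symm (x, t))) := by
          apply Continuous.integrable_of_hasCompactSupport
          · exact hGc.comp (Continuous.prodMk_right x)
          · apply HasCompactSupport.intro (isCompact_Icc (a := -R) (b := R))
            intro t ht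
            by_contra hne
            have h1 : ‖e.symm (x, t)‖ ≤ R := hRF _ hne
            have h2 : |t| ≤ ‖e.symm (x, t)‖ := by
              simpa [e, MeasurableEquiv.finTwoArrow, MeasurableEquiv.piFinTwo] using norm_le_pi_norm (e.symm (x, t)) 1
            exact ht (by constructor <;> [linarith [abs_le.mp (le_trans h2 h1)]; linarith [(abs_le.mp (le_trans h2 h1)).2]])
        have hint2 : Integrable (fun t : ℝ => h (e.symm (x, t))) := by
          apply Continuous.integrable_of_hasCompactSupport
          · exact (hh.continuous.comp (Homeomorph.finTwoArrow (X := ℝ)).symm.continuous).comp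
              (Continuous.prodMk_right x)
          · apply HasCompactSupport.intro (isCompact_Icc (a := -R) (b := R))
            intro t ht
            by_contra hne
            have h1 : ‖e.symm (x, t)‖ ≤ R := hRh _ hne
            have h2 : |t| ≤ ‖e.symm (x, t)‖ := by
              simpa [e, MeasurableEquiv.finTwoArrow, MeasurableEquiv.piFinTwo] using norm_le_pi_norm (e.symm (x, t)) 1
            exact ht (by constructor <;> [linarith [abs_le.mp (le_trans h2 h1)]; linarith [(abs_le.mp (le_trans h2 h1)).2]])
        exact integral_eq_zero_of_hasDerivAt_of_integrable hder hint1 hint2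
      simp [inner1]
  rw [key, main]

noncomputable def conjL : ℂ →L[ℝ] ℂ := (RCLike.conjCLE (K := ℂ)).toContinuousLinearMap

lemma conjL_apply (z : ℂ) : conjL z = (starRingEnd ℂ) z := rfl

lemma contDiff_conj_comp {f : E2 → ℂ} (hf : ContDiff ℝ (⊤ : ℕ∞) f) :
    ContDiff ℝ (⊤ : ℕ∞) (fun x => (starRingEnd ℂ) (f x)) := by
  exact conjL.contDiff.comp hf

lemma Dcov_leibniz (A : Fin 2 → E2 → ℝ) {f g : E2 → ℂ}
    (hf : ContDiff ℝ (⊤ : ℕ∞) f) (hg : ContDiff ℝ (⊤ : ℕ∞) g) (j : Fin 2) (x : E2) :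
    fderiv ℝ (fun y => f y * (starRingEnd ℂ) (g y)) x (Pi.single j 1)
      = Dcov A j f x * (starRingEnd ℂ) (g x) + f x * (starRingEnd ℂ) (Dcov A j g x) := by
  have hfd : HasFDerivAt f (fderiv ℝ f x) x :=
    (hf.differentiable (by simp) x).hasFDerivAt
  have hgd : HasFDerivAt g (fderiv ℝ g x) x :=
    (hg.differentiable (by simp) x).hasFDerivAt
  have hconj : HasFDerivAt (fun y => (starRingEnd ℂ) (g y))
      (conjL.comp (fderiv ℝ g x)) x := conjL.hasFDerivAt.comp x hgd
  have hmul : HasFDerivAt (fun y => f y * (starRingEnd ℂ) (g y)) _ x := hfd.mul hconj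
  rw [hmul.fderiv]
  simp only [ContinuousLinearMap.add_apply, ContinuousLinearMap.smul_apply,
    ContinuousLinearMap.coe_comp', Function.comp_apply, smul_eq_mul, conjL_apply]
  simp only [Dcov, map_add, map_mul, Complex.conj_I, Complex.conj_ofReal]
  ring

lemma contDiff_fderiv_apply {f : E2 → ℂ} (hf : ContDiff ℝ (⊤ : ℕ∞) f) (j : Fin 2) :
    ContDiff ℝ (⊤ : ℕ∞) (fun x => fderiv ℝ f x (Pi.single j 1)) := by
  have h1 : ContDiff ℝ (⊤ : ℕ∞) (fderiv ℝ f) := hf.fderiv_right (by simp)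
  exact (ContinuousLinearMap.apply ℝ ℂ ((Pi.single j 1 : E2))).contDiff.comp h1

lemma contDiff_Dcov {A : Fin 2 → E2 → ℝ} {f : E2 → ℂ} (hA : ∀ j, ContDiff ℝ (⊤ : ℕ∞) (A j))
    (hf : ContDiff ℝ (⊤ : ℕ∞) f) (j : Fin 2) : ContDiff ℝ (⊤ : ℕ∞) (Dcov A j f) := by
  unfold Dcov
  exact (contDiff_fderiv_apply hf j).add
    ((contDiff_const.mul (Complex.ofRealCLM.contDiff.comp (hA j))).mul hf)

lemma hcs_Dcov {A : Fin 2 → E2 → ℝ} {f : E2 → ℂ} (hf : HasCompactSupport f) (j : Fin 2) :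
    HasCompactSupport (Dcov A j f) := by
  unfold Dcov
  exact (hf.fderiv_apply ℝ (Pi.single j 1)).add (by exact hf.mul_left)


lemma hcs_conj {g : E2 → ℂ} (hg : HasCompactSupport g) :
    HasCompactSupport (fun x => (starRingEnd ℂ) (g x)) :=
  hg.comp_left (g := (starRingEnd ℂ)) (by simp)

lemma integral_Dcov_parts {A : Fin 2 → E2 → ℝ} {f g : E2 → ℂ}
    (hA : ∀ j, ContDiff ℝ (⊤ : ℕ∞) (A j))
    (hf : ContDiff ℝ (⊤ : ℕ∞) f) (hfs : HasCompactSupport f)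
    (hg : ContDiff ℝ (⊤ : ℕ∞) g) (hgs : HasCompactSupport g) (j : Fin 2) :
    ∫ x : E2, Dcov A j f x * (starRingEnd ℂ) (g x)
      = - ∫ x : E2, f x * (starRingEnd ℂ) (Dcov A j g x) := by
  have hP : ContDiff ℝ (⊤ : ℕ∞) (fun y => f y * (starRingEnd ℂ) (g y)) :=
    hf.mul (contDiff_conj_comp hg)
  have hPs : HasCompactSupport (fun y => f y * (starRingEnd ℂ) (g y)) := by
    exact hfs.mul_right
  have h0 := integral_fderiv_apply_eq_zero hP hPs j
  have hrw : (fun x => fderiv ℝ (fun y => f y * (starRingEnd ℂ) (g y)) x (Pi.single j 1))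
      = fun x => Dcov A j f x * (starRingEnd ℂ) (g x)
        + f x * (starRingEnd ℂ) (Dcov A j g x) :=
    funext fun x => Dcov_leibniz A hf hg j x
  rw [hrw] at h0
  have hint1 : Integrable (fun x : E2 => Dcov A j f x * (starRingEnd ℂ) (g x)) := by
    apply Continuous.integrable_of_hasCompactSupport
    · exact ((contDiff_Dcov hA hf j).continuous).mul (contDiff_conj_comp hg).continuous
    · exact (hcs_Dcov hfs j).mul_right
  have hint2 : Integrable (fun x : E2 => f x * (starRingEnd ℂ) (Dcov A j g x)) := by
    apply Continuous.integrable_of_hasCompactSupport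
    · exact hf.continuous.mul (contDiff_conj_comp (contDiff_Dcov hA hg j)).continuous
    · exact hfs.mul_right
  rw [integral_add hint1 hint2] at h0
  linear_combination h0

lemma Dcov_cubic (A : Fin 2 → E2 → ℝ) {f : E2 → ℂ} (hf : ContDiff ℝ (⊤ : ℕ∞) f) (j : Fin 2) (x : E2) :
    Dcov A j (fun y => (starRingEnd ℂ) (f y) * f y * f y) x
      = (starRingEnd ℂ) (Dcov A j f x) * f x ^ 2
        + 2 * ((starRingEnd ℂ) (f x) * f x) * Dcov A j f x := by
  have hfd : HasFDerivAt f (fderiv ℝ f x) x := (hf.differentiable (by simp) x).hasFDerivAt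
  have hconj : HasFDerivAt (fun y => (starRingEnd ℂ) (f y))
      (conjL.comp (fderiv ℝ f x)) x := conjL.hasFDerivAt.comp x hfd
  have h3 : HasFDerivAt (fun y => (starRingEnd ℂ) (f y) * f y * f y) _ x := (hconj.mul hfd).mul hfd
  have hD : Dcov A j (fun y => (starRingEnd ℂ) (f y) * f y * f y) x
      = fderiv ℝ (fun y => (starRingEnd ℂ) (f y) * f y * f y) x (Pi.single j 1)
        + Complex.I * (A j x) * ((starRingEnd ℂ) (f x) * f x * f x) := rfl
  rw [hD, h3.fderiv]
  simp only [ContinuousLinearMap.add_apply, ContinuousLinearMap.smul_apply,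
    ContinuousLinearMap.coe_comp', Function.comp_apply, smul_eq_mul, conjL_apply, Pi.mul_apply]
  have hd : fderiv ℝ f x (Pi.single j 1) = Dcov A j f x - Complex.I * (A j x) * f x := by
    simp [Dcov]
  rw [hd]
  simp only [map_sub, map_mul, Complex.conj_I, Complex.conj_ofReal]
  ring

lemma hcs_pow_norm {u : E2 → ℂ} (hu : HasCompactSupport u) (n : ℕ) :
    HasCompactSupport (fun x => ‖u x‖ ^ (n+1)) :=
  hu.comp_left (g := fun z : ℂ => ‖z‖ ^ (n+1)) (by simp)

lemma component_estimate {A : Fin 2 → E2 → ℝ} {ψ : E2 → ℂ}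
    (hA : ∀ j, ContDiff ℝ (⊤ : ℕ∞) (A j)) (hψ : ContDiff ℝ (⊤ : ℕ∞) ψ) (hψs : HasCompactSupport ψ)
    {B : ℝ} (hB : 0 ≤ B) (hBae : ∀ᵐ x : E2 ∂volume, ‖ψ x‖ ≤ B) (j : Fin 2) :
    ∫ x : E2, ‖Dcov A j ψ x‖ ^ 4
      ≤ 9 * B ^ 2 * ∫ x : E2, ‖Dcov A j (Dcov A j ψ) x‖ ^ 2 := by
  set f := Dcov A j ψ with hfdef
  have hf : ContDiff ℝ (⊤ : ℕ∞) f := contDiff_Dcov hA hψ j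
  have hfs : HasCompactSupport f := hcs_Dcov hψs j
  set w := Dcov A j f with hwdef
  have hw : ContDiff ℝ (⊤ : ℕ∞) w := contDiff_Dcov hA hf j
  have hws : HasCompactSupport w := hcs_Dcov hfs j
  set g : E2 → ℂ := fun y => (starRingEnd ℂ) (f y) * f y * f y with hgdef
  have hg : ContDiff ℝ (⊤ : ℕ∞) g := ((contDiff_conj_comp hf).mul hf).mul hf
  have hgs : HasCompactSupport g := by
    exact ((hcs_conj hfs).mul_right).mul_right
  set X := ∫ x : E2, ‖f x‖ ^ 4 with hXdef
  set S := ∫ x : E2, ‖w x‖ ^ 2 with hSdef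
  have hXnn : 0 ≤ X := integral_nonneg fun x => by positivity
  have hSnn : 0 ≤ S := integral_nonneg fun x => by positivity
  -- step 1: ∫ f * conj g = X
  have hpt : ∀ z : ℂ, z * (starRingEnd ℂ) ((starRingEnd ℂ) z * z * z) = ((‖z‖ ^ 4 : ℝ) : ℂ) := by
    intro z
    have h1 : z * (starRingEnd ℂ) ((starRingEnd ℂ) z * z * z)
        = (z * (starRingEnd ℂ) z) ^ 2 := by
      simp only [map_mul, Complex.conj_conj]; ring
    rw [h1, Complex.mul_conj]
    have : Complex.normSq z = ‖z‖ ^ 2 := by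
      rw [Complex.normSq_eq_norm_sq]
    rw [this]
    push_cast
    ring
  have hIBP := integral_Dcov_parts hA hψ hψs hg hgs j
  have hLHS : ∫ x : E2, Dcov A j ψ x * (starRingEnd ℂ) (g x) = ((X : ℝ) : ℂ) := by
    have h0 : ∫ x : E2, ((‖f x‖ ^ 4 : ℝ) : ℂ) = ((X : ℝ) : ℂ) := integral_ofReal
    rw [← h0]
    exact integral_congr_ae (Filter.Eventually.of_forall fun x => hpt (f x))
  -- step 2: pointwise bound on Dcov g
  have hDg : ∀ x : E2, ‖Dcov A j g x‖ ≤ 3 * ‖f x‖ ^ 2 * ‖w x‖ := by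
    intro x
    rw [hgdef, Dcov_cubic A hf j x]
    calc ‖(starRingEnd ℂ) (Dcov A j f x) * f x ^ 2
          + 2 * ((starRingEnd ℂ) (f x) * f x) * Dcov A j f x‖
        ≤ ‖(starRingEnd ℂ) (Dcov A j f x) * f x ^ 2‖
          + ‖2 * ((starRingEnd ℂ) (f x) * f x) * Dcov A j f x‖ := norm_add_le _ _
      _ ≤ 3 * ‖f x‖ ^ 2 * ‖w x‖ := by
          simp only [norm_mul, RCLike.norm_conj, norm_pow, Complex.norm_ofNat]
          rw [← hwdef]
          nlinarith [norm_nonneg (f x), norm_nonneg (w x)]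
  -- step 3: X ≤ 3 B ∫ ‖f‖² ‖w‖
  have hDgc : Continuous (Dcov A j g) := (contDiff_Dcov hA hg j).continuous
  have hDgs : HasCompactSupport (Dcov A j g) := hcs_Dcov hgs j
  have hint1 : Integrable (fun x : E2 => ‖ψ x‖ * ‖Dcov A j g x‖) := by
    apply Continuous.integrable_of_hasCompactSupport
    · exact hψ.continuous.norm.mul hDgc.norm
    · exact (hDgs.norm).mul_left
  have hintfw : Integrable (fun x : E2 => ‖f x‖ ^ 2 * ‖w x‖) := by
    apply Continuous.integrable_of_hasCompactSupport
    · exact ((hf.continuous.norm).pow 2).mul hw.continuous.norm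
    · exact (hws.norm).mul_left
  have hX1 : X ≤ ∫ x : E2, ‖ψ x‖ * ‖Dcov A j g x‖ := by
    have h2 : ((X : ℝ) : ℂ) = - ∫ x : E2, ψ x * (starRingEnd ℂ) (Dcov A j g x) := by
      rw [← hLHS]; exact hIBP
    have h3 : X = ‖∫ x : E2, ψ x * (starRingEnd ℂ) (Dcov A j g x)‖ := by
      have := congrArg norm h2
      rwa [norm_neg, Complex.norm_real, Real.norm_of_nonneg hXnn] at this
    rw [h3]
    calc ‖∫ x : E2, ψ x * (starRingEnd ℂ) (Dcov A j g x)‖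
        ≤ ∫ x : E2, ‖ψ x * (starRingEnd ℂ) (Dcov A j g x)‖ := norm_integral_le_integral_norm _
      _ = ∫ x : E2, ‖ψ x‖ * ‖Dcov A j g x‖ := by
          congr 1; funext x; rw [norm_mul, RCLike.norm_conj]
  have hX2 : ∫ x : E2, ‖ψ x‖ * ‖Dcov A j g x‖ ≤ (3 * B) * ∫ x : E2, ‖f x‖ ^ 2 * ‖w x‖ := by
    rw [← integral_const_mul]
    apply integral_mono_ae hint1 (hintfw.const_mul _)
    filter_upwards [hBae] with x hx
    calc ‖ψ x‖ * ‖Dcov A j g x‖ ≤ B * (3 * ‖f x‖ ^ 2 * ‖w x‖) := by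
          apply mul_le_mul hx (hDg x) (norm_nonneg _) hB
      _ = 3 * B * (‖f x‖ ^ 2 * ‖w x‖) := by ring
  -- step 4: Cauchy-Schwarz
  have htwo : Real.HolderConjugate 2 2 := Real.holderConjugate_iff.mpr ⟨one_lt_two, by norm_num⟩
  have hmem1 : MemLp (fun x : E2 => ‖f x‖ ^ 2) (ENNReal.ofReal 2) volume := by
    apply Continuous.memLp_of_hasCompactSupport ((hf.continuous.norm).pow 2)
    exact hcs_pow_norm hfs 1
  have hmem2 : MemLp (fun x : E2 => ‖w x‖) (ENNReal.ofReal 2) volume := by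
    apply Continuous.memLp_of_hasCompactSupport hw.continuous.norm
    exact hws.norm
  have hCS := integral_mul_le_Lp_mul_Lq_of_nonneg htwo
    (Filter.Eventually.of_forall fun x : E2 => by positivity)
    (Filter.Eventually.of_forall fun x : E2 => norm_nonneg (w x)) hmem1 hmem2
  have hrw1 : ∫ x : E2, (‖f x‖ ^ 2) ^ (2:ℝ) = X := by
    rw [hXdef]; congr 1; funext x
    rw [show (2:ℝ) = ((2:ℕ):ℝ) by norm_num, Real.rpow_natCast]; ring
  have hrw2 : ∫ x : E2, ‖w x‖ ^ (2:ℝ) = S := by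
    rw [hSdef]; congr 1; funext x
    rw [show (2:ℝ) = ((2:ℕ):ℝ) by norm_num, Real.rpow_natCast]
  rw [hrw1, hrw2] at hCS
  -- step 5: combine
  set a := X ^ ((1:ℝ)/2) with hadef
  set s := S ^ ((1:ℝ)/2) with hsdef
  have hann : 0 ≤ a := Real.rpow_nonneg hXnn _
  have hsnn : 0 ≤ s := Real.rpow_nonneg hSnn _
  have ha2 : a ^ 2 = X := by
    rw [hadef, ← Real.rpow_natCast (X ^ ((1:ℝ)/2)) 2, ← Real.rpow_mul hXnn]
    norm_num
  have hs2 : s ^ 2 = S := by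
    rw [hsdef, ← Real.rpow_natCast (S ^ ((1:ℝ)/2)) 2, ← Real.rpow_mul hSnn]
    norm_num
  have hfinal : X ≤ 3 * B * (a * s) := by
    calc X ≤ ∫ x : E2, ‖ψ x‖ * ‖Dcov A j g x‖ := hX1
      _ ≤ (3 * B) * ∫ x : E2, ‖f x‖ ^ 2 * ‖w x‖ := hX2
      _ ≤ (3 * B) * (a * s) := by
          apply mul_le_mul_of_nonneg_left _ (by linarith)
          exact hCS
  nlinarith [sq_nonneg (a - 3 * B * s), ha2, hs2, hfinal, hann, hsnn, hB]

lemma support_Dcov_subset {A : Fin 2 → E2 → ℝ} {f : E2 → ℂ} (j : Fin 2) :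
    Function.support (Dcov A j f) ⊆ tsupport f := by
  intro x hx
  by_contra hmem
  apply hx
  have h1 : fderiv ℝ f x = 0 := by
    by_contra h
    exact hmem (support_fderiv_subset ℝ (f := f) h)
  have h2 : f x = 0 := image_eq_zero_of_notMem_tsupport hmem
  simp [Dcov, h1, h2]

lemma tsupport_Dcov_subset {A : Fin 2 → E2 → ℝ} {f : E2 → ℂ} (j : Fin 2) :
    tsupport (Dcov A j f) ⊆ tsupport f :=
  closure_minimal (support_Dcov_subset j) (isClosed_tsupport f)

/-- Covariant Gagliardo–Nirenberg inequality:
`‖Dψ‖_{L⁴} ≲ ‖ψ‖_{L∞}^{1/2} ‖D⁽²⁾ψ‖_{L²}^{1/2}` with an absolute constant. -/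
theorem covariant_gagliardo_nirenberg :
    ∃ C : ℝ, 0 < C ∧
      ∀ (ψ : (Fin 2 → ℝ) → ℂ) (A : Fin 2 → (Fin 2 → ℝ) → ℝ),
        ContDiff ℝ (⊤ : ℕ∞) ψ → HasCompactSupport ψ →
        (∀ j, ContDiff ℝ (⊤ : ℕ∞) (A j)) →
        eLpNorm (fun x => (fun j : Fin 2 => Dcov A j ψ x)) 4 (volume : Measure (Fin 2 → ℝ))
          ≤ ENNReal.ofReal C
            * (eLpNorm ψ ⊤ (volume : Measure (Fin 2 → ℝ))) ^ ((1:ℝ)/2)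
            * (eLpNorm (fun x => (fun p : Fin 2 × Fin 2 => Dcov A p.1 (Dcov A p.2 ψ) x)) 2
                (volume : Measure (Fin 2 → ℝ))) ^ ((1:ℝ)/2) := by
  refine ⟨3, by norm_num, fun ψ A hψ hψs hA => ?_⟩
  set Dvec : E2 → (Fin 2 → ℂ) := fun x => (fun j : Fin 2 => Dcov A j ψ x) with hDvec
  set Pvec : E2 → (Fin 2 × Fin 2 → ℂ) :=
    fun x => (fun p : Fin 2 × Fin 2 => Dcov A p.1 (Dcov A p.2 ψ) x) with hPvec
  have hDvecc : Continuous Dvec :=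
    continuous_pi fun j => (contDiff_Dcov hA hψ j).continuous
  have hPvecc : Continuous Pvec :=
    continuous_pi fun p => (contDiff_Dcov hA (contDiff_Dcov hA hψ p.2) p.1).continuous
  have hDvecs : HasCompactSupport Dvec := by
    apply HasCompactSupport.intro hψs
    intro x hx
    funext j
    by_contra h
    exact hx (tsupport_Dcov_subset j (subset_tsupport _ h))
  have hPvecs : HasCompactSupport Pvec := by
    apply HasCompactSupport.intro hψs
    intro x hx
    funext p
    by_contra h
    exact hx (tsupport_Dcov_subset p.2 (tsupport_Dcov_subset p.1 (subset_tsupport _ h)))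
  -- L∞ bound
  have hψmem : MemLp ψ ⊤ (volume : Measure E2) :=
    hψ.continuous.memLp_of_hasCompactSupport hψs
  have hfin : eLpNorm ψ ⊤ (volume : Measure E2) ≠ ⊤ := hψmem.2.ne
  set B := (eLpNorm ψ ⊤ (volume : Measure E2)).toReal with hBdef
  have hBnn : 0 ≤ B := ENNReal.toReal_nonneg
  have hBae : ∀ᵐ x : E2 ∂volume, ‖ψ x‖ ≤ B := by
    filter_upwards [ae_le_eLpNormEssSup (f := ψ) (μ := (volume : Measure E2))] with x hx
    have h1 : ((‖ψ x‖₊ : ℝ≥0∞)).toReal ≤ B := by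
      apply ENNReal.toReal_mono
      · rwa [eLpNorm_exponent_top] at hfin
      · exact hx
    simpa using h1
  -- real quantities
  set Y := ∫ x : E2, ‖Dvec x‖ ^ 4 with hYdef
  set S := ∫ x : E2, ‖Pvec x‖ ^ 2 with hSdef
  have hYnn : 0 ≤ Y := integral_nonneg fun x => by positivity
  have hSnn : 0 ≤ S := integral_nonneg fun x => by positivity
  have hYint : Integrable (fun x : E2 => ‖Dvec x‖ ^ 4) := by
    apply Continuous.integrable_of_hasCompactSupport (hDvecc.norm.pow 4)
    have t2 := hDvecs.comp_left (g := fun z : Fin 2 → ℂ => ‖z‖ ^ 4) (by simp only [norm_zero]; norm_num)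
    exact t2
  have hSint : Integrable (fun x : E2 => ‖Pvec x‖ ^ 2) := by
    apply Continuous.integrable_of_hasCompactSupport (hPvecc.norm.pow 2)
    have t2 := hPvecs.comp_left (g := fun z : Fin 2 × Fin 2 → ℂ => ‖z‖ ^ 2) (by simp only [norm_zero]; norm_num)
    exact t2
  have hXint : ∀ j : Fin 2, Integrable (fun x : E2 => ‖Dcov A j ψ x‖ ^ 4) := by
    intro j
    apply Continuous.integrable_of_hasCompactSupport
      (((contDiff_Dcov hA hψ j).continuous.norm).pow 4)
    have t2 := (hcs_Dcov (A := A) hψs j).comp_left (g := fun z : ℂ => ‖z‖ ^ 4) (by simp only [norm_zero]; norm_num)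
    exact t2
  have hSjint : ∀ j : Fin 2, Integrable (fun x : E2 => ‖Dcov A j (Dcov A j ψ) x‖ ^ 2) := by
    intro j
    apply Continuous.integrable_of_hasCompactSupport
      (((contDiff_Dcov hA (contDiff_Dcov hA hψ j) j).continuous.norm).pow 2)
    have t2 := (hcs_Dcov (A := A) (hcs_Dcov (A := A) hψs j) j).comp_left (g := fun z : ℂ => ‖z‖ ^ 2) (by simp only [norm_zero]; norm_num)
    exact t2
  -- Y ≤ X 0 + X 1
  have hY1 : Y ≤ (∫ x : E2, ‖Dcov A 0 ψ x‖ ^ 4) + ∫ x : E2, ‖Dcov A 1 ψ x‖ ^ 4 := by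
    rw [← integral_add (hXint 0) (hXint 1)]
    apply integral_mono hYint ((hXint 0).add (hXint 1))
    intro x
    have h0 : ‖Dvec x‖ ≤ max ‖Dcov A 0 ψ x‖ ‖Dcov A 1 ψ x‖ := by
      apply pi_norm_le_iff_of_nonneg (le_max_iff.mpr (Or.inl (norm_nonneg _))) |>.mpr
      intro i
      fin_cases i
      · exact le_max_left _ _
      · exact le_max_right _ _
    have h1 : ‖Dvec x‖ ^ 4 ≤ max ‖Dcov A 0 ψ x‖ ‖Dcov A 1 ψ x‖ ^ 4 :=
      pow_le_pow_left₀ (norm_nonneg _) h0 4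
    have hnn0 := pow_nonneg (norm_nonneg (Dcov A 0 ψ x)) 4
    have hnn1 := pow_nonneg (norm_nonneg (Dcov A 1 ψ x)) 4
    simp only [Pi.add_apply]
    rcases max_cases ‖Dcov A 0 ψ x‖ ‖Dcov A 1 ψ x‖ with ⟨hm, _⟩ | ⟨hm, _⟩ <;>
      rw [hm] at h1 <;> linarith
  -- S j ≤ S
  have hSj : ∀ j : Fin 2, (∫ x : E2, ‖Dcov A j (Dcov A j ψ) x‖ ^ 2) ≤ S := by
    intro j
    apply integral_mono (hSjint j) hSint
    intro x
    apply pow_le_pow_left₀ (norm_nonneg _)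
    exact norm_le_pi_norm (Pvec x) (j, j)
  -- combine: Y ≤ 18 B² S
  have hkey : Y ≤ 18 * B ^ 2 * S := by
    have h0 := component_estimate hA hψ hψs hBnn hBae 0
    have h1 := component_estimate hA hψ hψs hBnn hBae 1
    have := hSj 0
    have := hSj 1
    nlinarith [hSnn, sq_nonneg B]
  -- eLpNorm computations
  have hp4 : (4 : ℝ≥0∞) ≠ 0 := by norm_num
  have hp4' : (4 : ℝ≥0∞) ≠ ⊤ := by norm_num
  have hDmem : MemLp Dvec 4 (volume : Measure E2) :=
    hDvecc.memLp_of_hasCompactSupport hDvecs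
  have hPmem : MemLp Pvec 2 (volume : Measure E2) :=
    hPvecc.memLp_of_hasCompactSupport hPvecs
  have hLHS : eLpNorm Dvec 4 (volume : Measure E2)
      = ENNReal.ofReal (Y ^ ((1:ℝ)/4)) := by
    rw [hDmem.eLpNorm_eq_integral_rpow_norm hp4 hp4']
    congr 1
    have : ∫ a : E2, ‖Dvec a‖ ^ (4 : ℝ≥0∞).toReal = Y := by
      rw [hYdef]
      congr 1
      funext a
      rw [show (4 : ℝ≥0∞).toReal = ((4:ℕ):ℝ) by norm_num, Real.rpow_natCast]
    rw [this]
    norm_num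
  have hp2 : (2 : ℝ≥0∞) ≠ 0 := by norm_num
  have hp2' : (2 : ℝ≥0∞) ≠ ⊤ := by norm_num
  have hRHS2 : eLpNorm Pvec 2 (volume : Measure E2)
      = ENNReal.ofReal (S ^ ((1:ℝ)/2)) := by
    rw [hPmem.eLpNorm_eq_integral_rpow_norm hp2 hp2']
    congr 1
    have : ∫ a : E2, ‖Pvec a‖ ^ (2 : ℝ≥0∞).toReal = S := by
      rw [hSdef]
      congr 1
      funext a
      rw [show (2 : ℝ≥0∞).toReal = ((2:ℕ):ℝ) by norm_num, Real.rpow_natCast]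
    rw [this]
    norm_num
  -- final real inequality
  have hreal : Y ^ ((1:ℝ)/4) ≤ 3 * B ^ ((1:ℝ)/2) * (S ^ ((1:ℝ)/2)) ^ ((1:ℝ)/2) := by
    have h18 : Y ^ ((1:ℝ)/4) ≤ (18 * B ^ 2 * S) ^ ((1:ℝ)/4) :=
      Real.rpow_le_rpow hYnn hkey (by norm_num)
    have hsplit : (18 * B ^ 2 * S) ^ ((1:ℝ)/4)
        = (18:ℝ) ^ ((1:ℝ)/4) * (B ^ 2) ^ ((1:ℝ)/4) * S ^ ((1:ℝ)/4) := by
      rw [Real.mul_rpow (by positivity) hSnn, Real.mul_rpow (by norm_num) (by positivity)]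
    have hB2 : (B ^ 2) ^ ((1:ℝ)/4) = B ^ ((1:ℝ)/2) := by
      rw [← Real.rpow_natCast B 2, ← Real.rpow_mul hBnn]
      norm_num
    have hS4 : S ^ ((1:ℝ)/4) = (S ^ ((1:ℝ)/2)) ^ ((1:ℝ)/2) := by
      rw [← Real.rpow_mul hSnn]
      norm_num
    have h183 : (18:ℝ) ^ ((1:ℝ)/4) ≤ 3 := by
      have h81 : ((81:ℝ)) ^ ((1:ℝ)/4) = 3 := by
        rw [show (81:ℝ) = 3 ^ (4:ℕ) by norm_num, ← Real.rpow_natCast 3 4,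
          ← Real.rpow_mul (by norm_num)]
        norm_num
      calc (18:ℝ) ^ ((1:ℝ)/4) ≤ (81:ℝ) ^ ((1:ℝ)/4) :=
            Real.rpow_le_rpow (by norm_num) (by norm_num) (by norm_num)
        _ = 3 := h81
    calc Y ^ ((1:ℝ)/4) ≤ (18 * B ^ 2 * S) ^ ((1:ℝ)/4) := h18
      _ = (18:ℝ) ^ ((1:ℝ)/4) * (B ^ 2) ^ ((1:ℝ)/4) * S ^ ((1:ℝ)/4) := hsplit
      _ = (18:ℝ) ^ ((1:ℝ)/4) * (B ^ ((1:ℝ)/2) * (S ^ ((1:ℝ)/2)) ^ ((1:ℝ)/2)) := by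
          rw [hB2, hS4]; ring
      _ ≤ 3 * (B ^ ((1:ℝ)/2) * (S ^ ((1:ℝ)/2)) ^ ((1:ℝ)/2)) := by
          apply mul_le_mul_of_nonneg_right h183 (by positivity)
      _ = 3 * B ^ ((1:ℝ)/2) * (S ^ ((1:ℝ)/2)) ^ ((1:ℝ)/2) := by ring
  -- assemble in ℝ≥0∞
  rw [hLHS, hRHS2, ← ENNReal.ofReal_toReal hfin, ← hBdef]
  have e1 : (ENNReal.ofReal B) ^ ((1:ℝ)/2) = ENNReal.ofReal (B ^ ((1:ℝ)/2)) :=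
    ENNReal.ofReal_rpow_of_nonneg hBnn (by norm_num)
  have e2 : (ENNReal.ofReal (S ^ ((1:ℝ)/2))) ^ ((1:ℝ)/2)
      = ENNReal.ofReal ((S ^ ((1:ℝ)/2)) ^ ((1:ℝ)/2)) :=
    ENNReal.ofReal_rpow_of_nonneg (by positivity) (by norm_num)
  rw [e1, e2, ← ENNReal.ofReal_mul (by norm_num), ← ENNReal.ofReal_mul (by positivity)]
  exact ENNReal.ofReal_le_ofReal hreal
end

section
/- For Schwartz ψ: ℝ² → ℂ, real-valued A_j ∈ 𝒮(ℝ²), and any t ∈ ℝ, the covariant Gagliardo–Nirenberg-type inequality ‖Jψ‖_{L⁴} ≲ ‖ψ‖_{L^∞}^{1/2} ‖J^{(2)}ψ‖_{L²}^{1/2} holds, where J_k := x_k + 2it(∂_k + iA_k), Jψ = (J₁ψ, J₂ψ), and J^{(2)}ψ denotes the collection J_j J_k ψ. -/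
open MeasureTheory Complex

/-- The covariant Galilean vector field `J_k = x_k + 2it D_k`. -/
noncomputable def Jcov (t : ℝ) (A : Fin 2 → (Fin 2 → ℝ) → ℝ) (k : Fin 2)
    (f : (Fin 2 → ℝ) → ℂ) : (Fin 2 → ℝ) → ℂ :=
  fun x => (x k : ℂ) * f x + 2 * Complex.I * (t : ℂ) * Dcov A k f x

/-!
Write `J_k = V_k + 2it ∂_k` with `V_k = x_k - 2t A_k` real. Because `V_k` is real and `2it` is
imaginary, `2it ∂_k (f ḡ) = (J_k f) ḡ - f (J_k g)‾`; integrating, `J_k` is symmetric on `L²`.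
Put `u_k = J_k ψ` and `N = Σ_j |u_j|²`. Symmetry gives
`‖N‖₂² = Σ_k ∫ (J_k ψ) (u_k N)‾ = ∫ ψ (Σ_k J_k (u_k N))‾`, and the two product rules express
`J_k (u_k N)` through `J_k J_j ψ`, `u` and `N` alone, so that `|Σ_k J_k (u_k N)| ≤ 6 |J⁽²⁾ψ| N`.
Hence `‖N‖₂ ≤ 6 ‖ψ‖_∞ ‖J⁽²⁾ψ‖₂`, and `‖Jψ‖₄² ≤ ‖N‖₂`.
-/

open SchwartzMap
open scoped ComplexConjugate LineDeriv ENNReal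

local notation "ℝ²" => Fin 2 → ℝ

section Algebra

variable {ι : Type*} [Fintype ι]

theorem norm_sum_mul_conj_self (u : ι → ℂ) : ‖∑ j, u j * conj (u j)‖ = ∑ j, ‖u j‖ ^ 2 := by
  simp_rw [mul_conj']
  norm_cast
  exact Real.norm_of_nonneg (by positivity)

theorem norm_sum_diag_mul_add_le (u : ι → ℂ) (w : ι × ι → ℂ) :
    ‖∑ k, (w (k, k) * ∑ j, u j * conj (u j)
        + u k * ∑ j, (w (k, j) * conj (u j) - u j * conj (w (k, j))))‖
      ≤ 3 * Fintype.card ι * ‖w‖ * ‖∑ j, u j * conj (u j)‖ := by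
  rw [norm_sum_mul_conj_self]
  set S := ∑ j, ‖u j‖ ^ 2
  have hw (p : ι × ι) : ‖w p‖ ≤ ‖w‖ := norm_le_pi_norm w p
  have hcross (k j : ι) : ‖w (k, j) * conj (u j) - u j * conj (w (k, j))‖ ≤ 2 * ‖w‖ * ‖u j‖ := by
    calc _ ≤ ‖w (k, j) * conj (u j)‖ + ‖u j * conj (w (k, j))‖ := norm_sub_le _ _
      _ = 2 * ‖w (k, j)‖ * ‖u j‖ := by simp only [norm_mul, RCLike.norm_conj]; ring
      _ ≤ 2 * ‖w‖ * ‖u j‖ := by gcongr; exact hw _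
  have hCS : (∑ j, ‖u j‖) ^ 2 ≤ Fintype.card ι * S := by
    simpa using sq_sum_le_card_mul_sum_sq (s := Finset.univ) (f := fun j => ‖u j‖)
  calc _ ≤ ∑ k, (‖w (k, k)‖ * S + ‖u k‖ * ∑ j, 2 * ‖w‖ * ‖u j‖) := by
        refine (norm_sum_le _ _).trans (Finset.sum_le_sum fun k _ => ?_)
        refine (norm_add_le _ _).trans ?_
        rw [norm_mul, norm_mul, norm_sum_mul_conj_self]
        gcongr
        exact (norm_sum_le _ _).trans (Finset.sum_le_sum fun j _ => hcross k j)
    _ ≤ ∑ k, (‖w‖ * S + ‖u k‖ * ∑ j, 2 * ‖w‖ * ‖u j‖) := by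
        gcongr with k; exact hw _
    _ = Fintype.card ι * ‖w‖ * S + 2 * ‖w‖ * (∑ j, ‖u j‖) ^ 2 := by
        simp only [Finset.sum_add_distrib, ← Finset.mul_sum, ← Finset.sum_mul, Finset.sum_const,
          Finset.card_univ, nsmul_eq_mul]
        ring
    _ ≤ Fintype.card ι * ‖w‖ * S + 2 * ‖w‖ * (Fintype.card ι * S) := by gcongr
    _ = 3 * Fintype.card ι * ‖w‖ * S := by ring

end Algebra

theorem enorm_integral_mul_conj_self {α : Type*} [MeasurableSpace α] {μ : Measure α} {F : α → ℂ}
    (hF : MemLp F 2 μ) : ‖∫ x, F x * conj (F x) ∂μ‖ₑ = eLpNorm F 2 μ ^ 2 := by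
  have hpos : 0 ≤ ∫ x, ‖F x‖ ^ 2 ∂μ := by positivity
  simp_rw [mul_conj', ← ofReal_pow]
  rw [integral_complex_ofReal, ← ofReal_norm, norm_real, Real.norm_of_nonneg hpos,
    hF.eLpNorm_eq_integral_rpow_norm two_ne_zero ENNReal.ofNat_ne_top,
    ← ENNReal.ofReal_pow (by positivity)]
  norm_num [← Real.sqrt_eq_rpow, Real.sq_sqrt hpos]

theorem eLpNorm_pi_four_sq_le {α ι : Type*} [MeasurableSpace α] [Fintype ι] {μ : Measure α}
    (u : ι → α → ℂ) :
    eLpNorm (fun x j => u j x) 4 μ ^ 2 ≤ eLpNorm (fun x => ∑ j, u j x * conj (u j x)) 2 μ := by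
  have h := eLpNorm_norm_rpow (μ := μ) (p := 2) (fun x j => u j x) (q := 2) two_pos
  rw [show (2 : ℝ≥0∞) * ENNReal.ofReal 2 = 4 by norm_num, ENNReal.rpow_two] at h
  rw [← h]
  refine eLpNorm_mono fun x => ?_
  rw [norm_sum_mul_conj_self, Real.norm_of_nonneg (by positivity)]
  have hS : 0 ≤ ∑ j, ‖u j x‖ ^ 2 := by positivity
  have hle : ‖fun j => u j x‖ ≤ √(∑ j, ‖u j x‖ ^ 2) :=
    (pi_norm_le_iff_of_nonneg (Real.sqrt_nonneg _)).2 fun j =>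
      Real.le_sqrt_of_sq_le (Finset.single_le_sum (f := fun j => ‖u j x‖ ^ 2)
        (fun j _ => by positivity) (Finset.mem_univ j))
  calc ‖fun j => u j x‖ ^ (2 : ℝ) = ‖fun j => u j x‖ ^ 2 := Real.rpow_two _
    _ ≤ √(∑ j, ‖u j x‖ ^ 2) ^ 2 := by gcongr
    _ = ∑ j, ‖u j x‖ ^ 2 := Real.sq_sqrt hS

section Pointwise

variable (t : ℝ) (A : Fin 2 → ℝ² → ℝ) (k : Fin 2)

theorem Jcov_apply (f : ℝ² → ℂ) (x : ℝ²) :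
    Jcov t A k f x = ((x k - 2 * t * A k x : ℝ) : ℂ) * f x
      + 2 * I * t * fderiv ℝ f x (Pi.single k 1) := by
  simp only [Jcov, Dcov]
  push_cast
  linear_combination (2 * t * A k x * f x) * I_sq

theorem Jcov_mul_conj_sub_mul_conj_Jcov (f g : ℝ² → ℂ) (x : ℝ²) :
    Jcov t A k f x * conj (g x) - f x * conj (Jcov t A k g x)
      = 2 * I * t * (fderiv ℝ f x (Pi.single k 1) * conj (g x)
          + f x * conj (fderiv ℝ g x (Pi.single k 1))) := by
  simp only [Jcov_apply, map_add, map_mul, conj_ofReal, conj_I, map_ofNat]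
  ring

theorem two_I_mul_fderiv_mul_conj {f g : ℝ² → ℂ} {x : ℝ²} (hf : DifferentiableAt ℝ f x)
    (hg : DifferentiableAt ℝ g x) :
    2 * I * t * fderiv ℝ (fun y => f y * conj (g y)) x (Pi.single k 1)
      = Jcov t A k f x * conj (g x) - f x * conj (Jcov t A k g x) := by
  have hprod : HasFDerivAt (fun y => f y * conj (g y)) _ x :=
    hf.hasFDerivAt.fun_mul hg.hasFDerivAt.star
  rw [hprod.fderiv, Jcov_mul_conj_sub_mul_conj_Jcov]
  simp only [add_apply, smul_apply, ContinuousLinearMap.comp_apply, smul_eq_mul,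
    ContinuousLinearEquiv.coe_coe, starL'_apply, star_def]
  ring

theorem Jcov_mul {f h : ℝ² → ℂ} {x : ℝ²} (hf : DifferentiableAt ℝ f x)
    (hh : DifferentiableAt ℝ h x) :
    Jcov t A k (fun y => f y * h y) x
      = Jcov t A k f x * h x + f x * (2 * I * t * fderiv ℝ h x (Pi.single k 1)) := by
  simp only [Jcov_apply, fderiv_fun_mul hf hh, add_apply, smul_apply, smul_eq_mul]
  ring

theorem Jcov_mul_sum_mul_conj {ι : Type*} [Fintype ι] {f : ℝ² → ℂ} {u : ι → ℝ² → ℂ} {x : ℝ²}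
    (hf : DifferentiableAt ℝ f x) (hu : ∀ j, DifferentiableAt ℝ (u j) x) :
    Jcov t A k (fun y => f y * ∑ j, u j y * conj (u j y)) x
      = Jcov t A k f x * ∑ j, u j x * conj (u j x)
        + f x * ∑ j, (Jcov t A k (u j) x * conj (u j x) - u j x * conj (Jcov t A k (u j) x)) := by
  have hterm (j : ι) : DifferentiableAt ℝ (fun y => u j y * conj (u j y)) x :=
    (hu j).fun_mul (hu j).star
  rw [Jcov_mul t A k hf (DifferentiableAt.fun_sum fun j _ => hterm j),
    fderiv_fun_sum fun j _ => hterm j, sum_apply, Finset.mul_sum _ _ (2 * I * t)]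
  simp_rw [two_I_mul_fderiv_mul_conj t A k (hu _) (hu _)]

end Pointwise

section Schwartz

variable {D : Type*} [NormedAddCommGroup D] [NormedSpace ℝ D]

noncomputable def mulConjCLM : ℂ →L[ℝ] ℂ →L[ℝ] ℂ :=
  (ContinuousLinearMap.mul ℝ ℂ).bilinearComp (.id ℝ ℂ) (conjCLE : ℂ →L[ℝ] ℂ)

@[simp]
theorem mulConjCLM_apply (a b : ℂ) : mulConjCLM a b = a * conj b := rfl

theorem integrable_mul_conj [MeasurableSpace D] [BorelSpace D] [FiniteDimensional ℝ D]
    {μ : Measure D} [μ.HasTemperateGrowth] (f g : 𝓢(D, ℂ)) :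
    Integrable (fun x => f x * conj (g x)) μ :=
  (pairing mulConjCLM f g).integrable (μ := μ)

noncomputable def normSqSum {ι : Type*} [Fintype ι] (u : ι → 𝓢(D, ℂ)) : 𝓢(D, ℂ) :=
  ∑ j, pairing mulConjCLM (u j) (u j)

theorem coe_normSqSum {ι : Type*} [Fintype ι] (u : ι → 𝓢(D, ℂ)) :
    ⇑(normSqSum u) = fun x => ∑ j, u j x * conj (u j x) := by
  ext x
  simp [normSqSum]

variable (t : ℝ) (A : Fin 2 → ℝ² → ℝ) (k : Fin 2)

noncomputable def jcovSchwartz (f : 𝓢(ℝ², ℂ)) : 𝓢(ℝ², ℂ) :=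
  smulLeftCLM ℂ (fun x => x k - 2 * t * A k x) f + (2 * I * t) • ∂_{(Pi.single k 1 : ℝ²)} f

variable {A} in
theorem coe_jcovSchwartz (hA : (A k).HasTemperateGrowth) (f : 𝓢(ℝ², ℂ)) :
    ⇑(jcovSchwartz t A k f) = Jcov t A k f := by
  have hx : (fun x : ℝ² => x k).HasTemperateGrowth :=
    (ContinuousLinearMap.proj k : ℝ² →L[ℝ] ℝ).hasTemperateGrowth
  have hV : (fun x : ℝ² => x k - 2 * t * A k x).HasTemperateGrowth :=
    hx.fun_sub ((Function.HasTemperateGrowth.const _).fun_mul hA)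
  ext x
  simp [jcovSchwartz, Jcov_apply, smulLeftCLM_apply_apply hV, lineDerivOp_apply_eq_fderiv]

variable {A} in
theorem integral_Jcov_mul_conj (hA : (A k).HasTemperateGrowth) (f g : 𝓢(ℝ², ℂ)) :
    ∫ x, Jcov t A k f x * conj (g x) = ∫ x, f x * conj (Jcov t A k g x) := by
  set e : ℝ² := Pi.single k 1
  have hderiv (h : 𝓢(ℝ², ℂ)) : (fun x => fderiv ℝ h x e) = ⇑(∂_{e} h : 𝓢(ℝ², ℂ)) := by
    ext x; rw [lineDerivOp_apply_eq_fderiv]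
  have ibp : ∫ x, f x * conj (fderiv ℝ g x e) = -∫ x, fderiv ℝ f x e * conj (g x) := by
    simpa [lineDerivOp_apply_eq_fderiv] using
      integral_bilinear_lineDerivOp_right_eq_neg_left (μ := volume) f g mulConjCLM e
  have hJf := integrable_mul_conj (μ := volume) (jcovSchwartz t A k f) g
  have hJg := integrable_mul_conj (μ := volume) f (jcovSchwartz t A k g)
  have hf' := integrable_mul_conj (μ := volume) (∂_{e} f : 𝓢(ℝ², ℂ)) g
  have hg' := integrable_mul_conj (μ := volume) f (∂_{e} g : 𝓢(ℝ², ℂ))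
  rw [coe_jcovSchwartz t k hA] at hJf hJg
  rw [← hderiv] at hf' hg'
  rw [← sub_eq_zero, ← integral_sub hJf hJg]
  simp_rw [Jcov_mul_conj_sub_mul_conj_Jcov]
  rw [integral_const_mul, integral_add hf' hg', ibp]
  ring

theorem norm_sum_Jcov_mul_normSqSum_le (u : Fin 2 → 𝓢(ℝ², ℂ)) (x : ℝ²) :
    ‖∑ k, Jcov t A k (fun y => u k y * normSqSum u y) x‖
      ≤ 6 * ‖fun p : Fin 2 × Fin 2 => Jcov t A p.1 (u p.2) x‖ * ‖normSqSum u x‖ := by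
  have hΦ (k : Fin 2) := Jcov_mul_sum_mul_conj t A k (u k).differentiableAt
    (u := fun j => ⇑(u j)) (x := x) fun j => (u j).differentiableAt
  simp only [coe_normSqSum, hΦ]
  convert norm_sum_diag_mul_add_le (fun j => u j x) (fun p => Jcov t A p.1 (u p.2) x) using 2
  norm_num

end Schwartz

section Estimate

variable (t : ℝ) {A : Fin 2 → ℝ² → ℝ} {ψ : 𝓢(ℝ², ℂ)} {u : Fin 2 → 𝓢(ℝ², ℂ)}

theorem integral_normSqSum_mul_conj_eq (hA : ∀ k, (A k).HasTemperateGrowth)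
    (hu : ∀ k, ⇑(u k) = Jcov t A k ψ) :
    ∫ x, normSqSum u x * conj (normSqSum u x)
      = ∫ x, ψ x * conj (∑ k, Jcov t A k (fun y => u k y * normSqSum u y) x) := by
  set N := normSqSum u
  set P : Fin 2 → 𝓢(ℝ², ℂ) := fun k => pairing (ContinuousLinearMap.mul ℝ ℂ) (u k) N
  have hP (k : Fin 2) (y : ℝ²) : u k y * N y = P k y := by simp [P]
  have hJP (k : Fin 2) : Jcov t A k (P k) = jcovSchwartz t A k (P k) :=
    (coe_jcovSchwartz t k (hA k) _).symm
  simp_rw [hP]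
  calc ∫ x, N x * conj (N x) = ∑ k, ∫ x, Jcov t A k ψ x * conj (P k x) := by
        rw [← integral_finsetSum _ fun k _ => by
          simpa only [hu] using integrable_mul_conj (u k) (P k)]
        congr 1 with x
        simp only [← hu, ← hP, map_mul, ← mul_assoc, ← Finset.sum_mul, N, coe_normSqSum]
    _ = ∑ k, ∫ x, ψ x * conj (Jcov t A k (P k) x) :=
        Finset.sum_congr rfl fun k _ => integral_Jcov_mul_conj t k (hA k) ψ (P k)
    _ = _ := by
        rw [← integral_finsetSum _ fun k _ => by
          simpa only [hJP] using integrable_mul_conj ψ (jcovSchwartz t A k (P k))]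
        simp only [map_sum, Finset.mul_sum]

variable {t} in
theorem eLpNorm_sum_Jcov_mul_normSqSum_le (hA : ∀ k, (A k).HasTemperateGrowth) :
    eLpNorm (fun x => ∑ k, Jcov t A k (fun y => u k y * normSqSum u y) x) 1 volume
      ≤ 6 * eLpNorm (fun x (p : Fin 2 × Fin 2) => Jcov t A p.1 (u p.2) x) 2 volume
        * eLpNorm (normSqSum u) 2 volume := by
  have hW : Continuous fun x (p : Fin 2 × Fin 2) => Jcov t A p.1 (u p.2) x :=
    continuous_pi fun p => by
      rw [← coe_jcovSchwartz t p.1 (hA p.1)]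
      exact (jcovSchwartz t A p.1 (u p.2)).continuous
  calc _ ≤ eLpNorm (fun x => 6 * ‖fun p : Fin 2 × Fin 2 => Jcov t A p.1 (u p.2) x‖
          * ‖normSqSum u x‖) 1 volume :=
        eLpNorm_mono_real (norm_sum_Jcov_mul_normSqSum_le t A u)
    _ ≤ _ := by
        simpa using eLpNorm_le_eLpNorm_mul_eLpNorm'_of_norm hW.aestronglyMeasurable
          (normSqSum u).continuous.aestronglyMeasurable (fun a b => 6 * ‖a‖ * ‖b‖) 6
          (ae_of_all _ fun x => by simp)

theorem eLpNorm_normSqSum_le (hA : ∀ k, (A k).HasTemperateGrowth)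
    (hu : ∀ k, ⇑(u k) = Jcov t A k ψ) :
    eLpNorm (normSqSum u) 2 volume
      ≤ 6 * eLpNorm ψ ⊤ volume
        * eLpNorm (fun x (p : Fin 2 × Fin 2) => Jcov t A p.1 (u p.2) x) 2 volume := by
  set N := normSqSum u
  set W := fun x (p : Fin 2 × Fin 2) => Jcov t A p.1 (u p.2) x
  set Φ := fun x => ∑ k, Jcov t A k (fun y => u k y * N y) x
  have hΦ : Continuous Φ := continuous_finsetSum _ fun k _ => by
    have := (jcovSchwartz t A k (pairing (ContinuousLinearMap.mul ℝ ℂ) (u k) N)).continuous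
    rwa [coe_jcovSchwartz t k (hA k)] at this
  have key : eLpNorm N 2 volume ^ 2
      ≤ 6 * eLpNorm ψ ⊤ volume * eLpNorm W 2 volume * eLpNorm N 2 volume := by
    calc eLpNorm N 2 volume ^ 2 = ‖∫ x, N x * conj (N x)‖ₑ :=
          (enorm_integral_mul_conj_self (N.memLp 2 volume)).symm
      _ = ‖∫ x, ψ x * conj (Φ x)‖ₑ := by rw [integral_normSqSum_mul_conj_eq t hA hu]
      _ ≤ eLpNorm (fun x => ψ x * conj (Φ x)) 1 volume := by
          rw [eLpNorm_one_eq_lintegral_enorm]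
          exact enorm_integral_le_lintegral_enorm _
      _ ≤ eLpNorm ψ ⊤ volume * eLpNorm Φ 1 volume := by
          simpa using eLpNorm_le_eLpNorm_top_mul_eLpNorm 1 ψ hΦ.aestronglyMeasurable
            (fun a b => a * conj b) 1 (ae_of_all _ fun x => by simp)
      _ ≤ eLpNorm ψ ⊤ volume * (6 * eLpNorm W 2 volume * eLpNorm N 2 volume) := by
          gcongr
          exact eLpNorm_sum_Jcov_mul_normSqSum_le hA
      _ = 6 * eLpNorm ψ ⊤ volume * eLpNorm W 2 volume * eLpNorm N 2 volume := by ring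
  rcases eq_or_ne (eLpNorm N 2 volume) 0 with h0 | h0
  · simp [h0]
  · rw [sq] at key
    exact (ENNReal.mul_le_mul_iff_left h0 (N.eLpNorm_lt_top 2 volume).ne).1 key

end Estimate

/-- Covariant Gagliardo–Nirenberg inequality for `J`, for Schwartz `ψ` and
Schwartz real potentials: `‖Jψ‖_{L⁴} ≲ ‖ψ‖_{L∞}^{1/2} ‖J⁽²⁾ψ‖_{L²}^{1/2}`
with an absolute constant. -/
theorem covariant_gagliardo_nirenberg_J :
    ∃ C : ℝ, 0 < C ∧
      ∀ (ψ : SchwartzMap (Fin 2 → ℝ) ℂ) (A : Fin 2 → SchwartzMap (Fin 2 → ℝ) ℝ) (t : ℝ),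
        eLpNorm (fun x => (fun j : Fin 2 =>
            Jcov t (fun j => (A j : (Fin 2 → ℝ) → ℝ)) j (ψ : (Fin 2 → ℝ) → ℂ) x)) 4
            (volume : Measure (Fin 2 → ℝ))
          ≤ ENNReal.ofReal C
            * (eLpNorm (ψ : (Fin 2 → ℝ) → ℂ) ⊤ (volume : Measure (Fin 2 → ℝ))) ^ ((1:ℝ)/2)
            * (eLpNorm (fun x => (fun p : Fin 2 × Fin 2 =>
                  Jcov t (fun j => (A j : (Fin 2 → ℝ) → ℝ)) p.1
                    (Jcov t (fun j => (A j : (Fin 2 → ℝ) → ℝ)) p.2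
                      (ψ : (Fin 2 → ℝ) → ℂ)) x)) 2
                (volume : Measure (Fin 2 → ℝ))) ^ ((1:ℝ)/2) := by
  refine ⟨6 ^ (1 / 2 : ℝ), by positivity, fun ψ A t => ?_⟩
  set A' : Fin 2 → ℝ² → ℝ := fun j => A j
  have hA (k : Fin 2) : (A' k).HasTemperateGrowth := (A k).hasTemperateGrowth
  have hu (k : Fin 2) := coe_jcovSchwartz t k (hA k) ψ
  have hL4 := eLpNorm_pi_four_sq_le (μ := volume) fun k => ⇑(jcovSchwartz t A' k ψ)
  have hN := eLpNorm_normSqSum_le t hA hu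
  simp only [hu, coe_normSqSum] at hL4 hN
  calc _ = (eLpNorm (fun x j => Jcov t A' j ψ x) 4 volume ^ 2) ^ (1 / 2 : ℝ) := by
        rw [← ENNReal.rpow_natCast, ← ENNReal.rpow_mul]; norm_num
    _ ≤ (6 * eLpNorm ψ ⊤ volume
          * eLpNorm (fun x (p : Fin 2 × Fin 2) => Jcov t A' p.1 (Jcov t A' p.2 ψ) x) 2 volume)
          ^ (1 / 2 : ℝ) := by gcongr; exact hL4.trans hN
    _ = _ := by
        rw [ENNReal.mul_rpow_of_nonneg _ _ (by norm_num),
          ENNReal.mul_rpow_of_nonneg _ _ (by norm_num),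
          ← ENNReal.ofReal_rpow_of_nonneg (by norm_num) (by norm_num), ENNReal.ofReal_ofNat]
end
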